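/- For every ξ′ = (ξ₁,ξ₂) ∈ ℝ² and every μ ∈ ℝ with μ ≠ 0, setting ρ = √(|ξ′|² + μ²) and M₊(ξ′,μ) = ξ₁α₁ + ξ₂α₂ + iρα₃, the kernel of the linear map ℂ⁴ → ℂ⁴ given by M₊(ξ′,μ) − iμ·I₄ has dimension 2, and the vectors h₁,₊(ξ′,μ), h₂,₊(ξ′,μ) form a basis of this kernel. -/

import Mathlib

open Matrix Complex

noncomputable section

/-- Pauli matrices -/
def σ1 : Matrix (Fin 2) (Fin 2) ℂ := !![0, 1; 1, 0]
def σ2 : Matrix (Fin 2) (Fin 2) ℂ := !![0, -I; I, 0]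
def σ3 : Matrix (Fin 2) (Fin 2) ℂ := !![1, 0; 0, -1]

/-- Dirac matrices, as 4×4 block matrices indexed by `Fin 2 ⊕ Fin 2`. -/
def α1 : Matrix (Fin 2 ⊕ Fin 2) (Fin 2 ⊕ Fin 2) ℂ := Matrix.fromBlocks 0 σ1 σ1 0
def α2 : Matrix (Fin 2 ⊕ Fin 2) (Fin 2 ⊕ Fin 2) ℂ := Matrix.fromBlocks 0 σ2 σ2 0
def α3 : Matrix (Fin 2 ⊕ Fin 2) (Fin 2 ⊕ Fin 2) ℂ := Matrix.fromBlocks 0 σ3 σ3 0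

/-- `ρ = √(|ξ′|² + μ²)`. -/
def ρ (ξ₁ ξ₂ μ : ℝ) : ℝ := Real.sqrt (ξ₁ ^ 2 + ξ₂ ^ 2 + μ ^ 2)

/-- `Λ₊(ξ′,μ) = ξ₁σ₁ + ξ₂σ₂ + iρσ₃`. -/
def Λp (ξ₁ ξ₂ μ : ℝ) : Matrix (Fin 2) (Fin 2) ℂ :=
  (ξ₁ : ℂ) • σ1 + (ξ₂ : ℂ) • σ2 + (I * (ρ ξ₁ ξ₂ μ : ℝ)) • σ3

/-- `M₊(ξ′,μ) = ξ₁α₁ + ξ₂α₂ + iρα₃`. -/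
def Mp (ξ₁ ξ₂ μ : ℝ) : Matrix (Fin 2 ⊕ Fin 2) (Fin 2 ⊕ Fin 2) ℂ :=
  (ξ₁ : ℂ) • α1 + (ξ₂ : ℂ) • α2 + (I * (ρ ξ₁ ξ₂ μ : ℝ)) • α3

/-- `e₁ = (1,0)`, `e₂ = (0,1) ∈ ℂ²`. -/
def e1 : Fin 2 → ℂ := ![1, 0]
def e2 : Fin 2 → ℂ := ![0, 1]

/-- `h₁,₊ = (iμ·e₁, Λ₊e₁)` and `h₂,₊ = (Λ₊e₂, iμ·e₂)` in `ℂ⁴`. -/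
def h1p (ξ₁ ξ₂ μ : ℝ) : (Fin 2 ⊕ Fin 2) → ℂ :=
  Sum.elim ((I * μ) • e1) ((Λp ξ₁ ξ₂ μ).mulVec e1)
def h2p (ξ₁ ξ₂ μ : ℝ) : (Fin 2 ⊕ Fin 2) → ℂ :=
  Sum.elim ((Λp ξ₁ ξ₂ μ).mulVec e2) ((I * μ) • e2)

/-! The operator is the block matrix `[[-iμ, Λ₊], [Λ₊, -iμ]]`, and the Pauli relations give
`Λ₊² = (ξ₁² + ξ₂² - ρ²) I₂ = (iμ)² I₂`. Hence `(u, w)` lies in the kernel iff `Λ₊ w = iμ u`, the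
second block equation `Λ₊ u = iμ w` then being automatic: the kernel is the graph of
`w ↦ (iμ)⁻¹ Λ₊ w`, of dimension 2. Both `h₁,₊ = (iμ e₁, Λ₊ e₁)` and `h₂,₊ = (Λ₊ e₂, iμ e₂)` have the
shape `(c v, Λ₊ v)` or `(Λ₊ v, c v)` with `c = iμ`, which `Λ₊² = c²` puts in the kernel; their first blocks
`iμ e₁` and `Λ₊ e₂ = (ξ₁ - iξ₂, -iρ)` are independent since `μ ≠ 0` and `ρ > 0`. -/

section BlockKernel

variable {K : Type*} [Field K] {n : Type*} [Fintype n] [DecidableEq n]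

theorem fromBlocks_zero_sub_smul_one_mulVec (L : Matrix n n K) (c : K) (u w : n → K) :
    (fromBlocks 0 L L 0 - c • 1) *ᵥ Sum.elim u w =
      Sum.elim (L *ᵥ w - c • u) (L *ᵥ u - c • w) := by
  rw [sub_mulVec, smul_mulVec, one_mulVec, fromBlocks_mulVec]
  ext (i | i) <;> simp

theorem sumElim_mem_ker_fromBlocks_iff (L : Matrix n n K) (c : K) (u w : n → K) :
    Sum.elim u w ∈ LinearMap.ker (toLin' (fromBlocks 0 L L 0 - c • 1)) ↔
      L *ᵥ w = c • u ∧ L *ᵥ u = c • w := by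
  rw [LinearMap.mem_ker, toLin'_apply, fromBlocks_zero_sub_smul_one_mulVec, ← Sum.elim_zero_zero,
    Sum.elim_eq_iff, sub_eq_zero, sub_eq_zero]

variable {L : Matrix n n K} {c : K}

theorem sumElim_smul_mulVec_mem_ker (hL : L * L = c ^ 2 • 1) (v : n → K) :
    Sum.elim (c • v) (L *ᵥ v) ∈ LinearMap.ker (toLin' (fromBlocks 0 L L 0 - c • 1)) := by
  rw [sumElim_mem_ker_fromBlocks_iff, mulVec_mulVec, hL, smul_mulVec, one_mulVec, mulVec_smul]
  exact ⟨by rw [pow_two, mul_smul], rfl⟩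

theorem sumElim_mulVec_smul_mem_ker (hL : L * L = c ^ 2 • 1) (v : n → K) :
    Sum.elim (L *ᵥ v) (c • v) ∈ LinearMap.ker (toLin' (fromBlocks 0 L L 0 - c • 1)) := by
  rw [sumElim_mem_ker_fromBlocks_iff, mulVec_mulVec, hL, smul_mulVec, one_mulVec, mulVec_smul]
  exact ⟨rfl, by rw [pow_two, mul_smul]⟩

theorem ker_fromBlocks_zero_sub_smul_eq_range (hc : c ≠ 0) (hL : L * L = c ^ 2 • 1) :
    LinearMap.ker (toLin' (fromBlocks 0 L L 0 - c • 1)) =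
      LinearMap.range (toLin' (fromRows (c⁻¹ • L) 1)) := by
  ext v
  rw [← Sum.elim_comp_inl_inr v, sumElim_mem_ker_fromBlocks_iff, LinearMap.mem_range]
  simp only [toLin'_apply, fromRows_mulVec, one_mulVec, Sum.elim_eq_iff]
  constructor
  · rintro ⟨hw, -⟩
    exact ⟨v ∘ Sum.inr, by rw [smul_mulVec, hw, inv_smul_smul₀ hc], rfl⟩
  · rintro ⟨w, hu, hw⟩
    rw [← hu, ← hw, smul_mulVec, smul_smul, mul_inv_cancel₀ hc, one_smul, mulVec_smul,
      mulVec_mulVec, hL, smul_mulVec, one_mulVec, smul_smul, pow_two, inv_mul_cancel_left₀ hc]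
    exact ⟨rfl, rfl⟩

theorem finrank_ker_fromBlocks_zero_sub_smul (hc : c ≠ 0) (hL : L * L = c ^ 2 • 1) :
    Module.finrank K (LinearMap.ker (toLin' (fromBlocks 0 L L 0 - c • 1))) =
      Fintype.card n := by
  rw [ker_fromBlocks_zero_sub_smul_eq_range hc hL, LinearMap.finrank_range_of_inj,
    Module.finrank_fintype_fun_eq_card]
  intro v w hvw
  simpa using congrArg (· ∘ Sum.inr) hvw

end BlockKernel

theorem pauli_combination_mul_self (a b c : ℂ) :
    (a • σ1 + b • σ2 + c • σ3) * (a • σ1 + b • σ2 + c • σ3) = (a ^ 2 + b ^ 2 + c ^ 2) • 1 := by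
  ext i j
  fin_cases i <;> fin_cases j <;> simp [σ1, σ2, σ3, Matrix.mul_apply, Fin.sum_univ_two]
  · linear_combination (-b ^ 2) * I_sq
  · ring
  · ring
  · linear_combination (-b ^ 2) * I_sq

theorem Λp_mul_self (ξ₁ ξ₂ μ : ℝ) : Λp ξ₁ ξ₂ μ * Λp ξ₁ ξ₂ μ = (I * μ) ^ 2 • 1 := by
  have hρ : ((ρ ξ₁ ξ₂ μ : ℝ) : ℂ) ^ 2 = ξ₁ ^ 2 + ξ₂ ^ 2 + μ ^ 2 := by
    rw [ρ, ← ofReal_pow, Real.sq_sqrt (by positivity)]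
    push_cast
    ring
  rw [Λp, pauli_combination_mul_self]
  congr 1
  linear_combination ((ρ ξ₁ ξ₂ μ : ℂ) ^ 2 - μ ^ 2) * I_sq - hρ

theorem Mp_eq_fromBlocks (ξ₁ ξ₂ μ : ℝ) :
    Mp ξ₁ ξ₂ μ = fromBlocks 0 (Λp ξ₁ ξ₂ μ) (Λp ξ₁ ξ₂ μ) 0 := by
  simp [Mp, Λp, α1, α2, α3, fromBlocks_smul, fromBlocks_add]

theorem linearIndependent_h1p_h2p (ξ₁ ξ₂ μ : ℝ) (hμ : μ ≠ 0) :
    LinearIndependent ℂ ![h1p ξ₁ ξ₂ μ, h2p ξ₁ ξ₂ μ] := by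
  have hρ : (ρ ξ₁ ξ₂ μ : ℂ) ≠ 0 := ofReal_ne_zero.2 (Real.sqrt_pos.2 (by positivity)).ne'
  rw [LinearIndependent.pair_iff]
  intro s t hst
  obtain rfl : t = 0 := by
    simpa [h1p, h2p, e1, e2, Λp, σ1, σ2, σ3, hρ] using congrFun hst (Sum.inl 1)
  have hs : s * (I * μ) = 0 := by simpa [h1p, e1] using congrFun hst (Sum.inl 0)
  exact ⟨by simpa [hμ] using hs, rfl⟩

/-- for `μ ≠ 0`, the kernel of `M₊(ξ′,μ) − iμ·I₄` (as a linear map `ℂ⁴ → ℂ⁴`)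
has dimension 2, and `h₁,₊(ξ′,μ), h₂,₊(ξ′,μ)` form a basis of this kernel. -/
theorem kernel_dim_two_and_basis (ξ₁ ξ₂ μ : ℝ) (hμ : μ ≠ 0) :
    Module.finrank ℂ
        (LinearMap.ker (Matrix.toLin' (Mp ξ₁ ξ₂ μ - (I * μ) • 1))) = 2 ∧
    LinearIndependent ℂ ![h1p ξ₁ ξ₂ μ, h2p ξ₁ ξ₂ μ] ∧
    Submodule.span ℂ {h1p ξ₁ ξ₂ μ, h2p ξ₁ ξ₂ μ}
      = LinearMap.ker (Matrix.toLin' (Mp ξ₁ ξ₂ μ - (I * μ) • 1)) := by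
  have hc : I * μ ≠ 0 := mul_ne_zero I_ne_zero (ofReal_ne_zero.2 hμ)
  have hΛ := Λp_mul_self ξ₁ ξ₂ μ
  have hdim := finrank_ker_fromBlocks_zero_sub_smul hc hΛ
  have hli := linearIndependent_h1p_h2p ξ₁ ξ₂ μ hμ
  rw [Fintype.card_fin, ← Mp_eq_fromBlocks] at hdim
  have hle : Submodule.span ℂ {h1p ξ₁ ξ₂ μ, h2p ξ₁ ξ₂ μ}
      ≤ LinearMap.ker (Matrix.toLin' (Mp ξ₁ ξ₂ μ - (I * μ) • 1)) := by
    rw [Submodule.span_le, Set.pair_subset_iff, Mp_eq_fromBlocks]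
    exact ⟨sumElim_smul_mulVec_mem_ker hΛ e1, sumElim_mulVec_smul_mem_ker hΛ e2⟩
  refine ⟨hdim, hli, Submodule.eq_of_le_of_finrank_eq hle ?_⟩
  rw [hdim, ← Matrix.range_cons_cons_empty, finrank_span_eq_card hli, Fintype.card_fin]
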